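/- arXiv:2001.04870 — 4 statements merged into one kernel-verified Lean document; each statement's English description precedes it below -/
import Mathlib

section
/- Let G₁=(V₁,E₁) and G₂=(V₂,E₂) be vertex-disjoint finite simple graphs with V₁ and V₂ both nonempty. Then the independent neighborhood polynomial of their join satisfies N^{(i)}(G₁ + G₂, x) = I(G₁, x) + I(G₂, x) − 1, where I denotes the independence polynomial. -/
/-!
In the join every vertex of `G₁` is adjacent to every vertex of `G₂`, so an independent set of
`G₁ + G₂` lies entirely in one side and is an independent set of that side. Conversely, a set in
`V₁` lies in the neighbourhood of any vertex of `V₂`, and vice versa; this is where nonemptiness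
of both sides is needed. Hence the independent members of the neighbourhood complex are exactly
the independent sets of `G₁` and of `G₂`, the two families sharing only `∅`.
-/

open Finset Polynomial

open scoped Classical in
/-- The neighborhood complex of `G`: all finite vertex subsets contained in the open
neighborhood of some vertex. -/
noncomputable def nhdComplex {V : Type*} [Fintype V] (G : SimpleGraph V) : Finset (Finset V) :=
  Finset.univ.filter (fun A => ∃ v : V, (A : Set V) ⊆ G.neighborSet v)

open scoped Classical in
/-- The independent neighborhood polynomial of `G`. -/
noncomputable def indNbhdPoly {V : Type*} [Fintype V] (G : SimpleGraph V) : Polynomial ℤ :=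
  ∑ A ∈ (nhdComplex G).filter (fun A => ∀ u ∈ A, ∀ w ∈ A, ¬ G.Adj u w), X ^ A.card

open scoped Classical in
/-- The independence polynomial of `G`: the generating function of the independent
vertex subsets of `G` (including the empty set). -/
noncomputable def indepPoly {V : Type*} [Fintype V] (G : SimpleGraph V) : Polynomial ℤ :=
  ∑ A ∈ Finset.univ.filter (fun A : Finset V => ∀ u ∈ A, ∀ w ∈ A, ¬ G.Adj u w), X ^ A.card

/-- The join of two vertex-disjoint graphs: their disjoint union together with all
edges joining vertices of the first to vertices of the second. -/
def SimpleGraph.graphJoin {V₁ V₂ : Type*} (G₁ : SimpleGraph V₁) (G₂ : SimpleGraph V₂) :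
    SimpleGraph (V₁ ⊕ V₂) :=
  (G₁ ⊕g G₂) ⊔ completeBipartiteGraph V₁ V₂

namespace Finset

theorem sum_union_of_inter_eq_singleton {α β : Type*} [DecidableEq α] [AddCommGroup β]
    {s t : Finset α} {a : α} (h : s ∩ t = {a}) (f : α → β) :
    ∑ x ∈ s ∪ t, f x = ∑ x ∈ s, f x + ∑ x ∈ t, f x - f a := by
  rw [eq_sub_iff_add_eq, ← sum_union_inter, h, sum_singleton]

theorem map_inl_inter_map_inr_eq_singleton_empty {α β : Type*} [DecidableEq (Finset (α ⊕ β))]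
    {S : Finset (Finset α)} {T : Finset (Finset β)} (hS : ∅ ∈ S) (hT : ∅ ∈ T) :
    S.map (mapEmbedding .inl).toEmbedding ∩ T.map (mapEmbedding .inr).toEmbedding = {∅} := by
  ext A
  simp only [mem_inter, mem_map, RelEmbedding.coe_toEmbedding, mapEmbedding_apply,
    mem_singleton]
  constructor
  · rintro ⟨⟨B, -, rfl⟩, C, -, hC⟩
    have hdisj := disjoint_map_inl_map_inr B C
    rwa [hC, disjoint_self] at hdisj
  · rintro rfl
    exact ⟨⟨∅, hS, map_empty _⟩, ∅, hT, map_empty _⟩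

end Finset

open scoped Classical in
noncomputable def indepFinsets {V : Type*} [Fintype V] (G : SimpleGraph V) :
    Finset (Finset V) :=
  univ.filter fun A => ∀ u ∈ A, ∀ w ∈ A, ¬ G.Adj u w

theorem mem_indepFinsets {V : Type*} [Fintype V] {G : SimpleGraph V} {A : Finset V} :
    A ∈ indepFinsets G ↔ ∀ u ∈ A, ∀ w ∈ A, ¬ G.Adj u w := by
  simp [indepFinsets]

theorem empty_mem_indepFinsets {V : Type*} [Fintype V] (G : SimpleGraph V) :
    ∅ ∈ indepFinsets G := by
  simp [mem_indepFinsets]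

theorem indepPoly_eq_sum_indepFinsets {V : Type*} [Fintype V] (G : SimpleGraph V) :
    indepPoly G = ∑ A ∈ indepFinsets G, X ^ #A :=
  rfl

theorem indNbhdPoly_eq_sum_inter_indepFinsets {V : Type*} [Fintype V] [DecidableEq V]
    (G : SimpleGraph V) :
    indNbhdPoly G = ∑ A ∈ nhdComplex G ∩ indepFinsets G, X ^ #A := by
  refine sum_congr ?_ fun _ _ => rfl
  ext A
  simp only [mem_filter, mem_inter, mem_indepFinsets]

namespace SimpleGraph

variable {V₁ V₂ : Type*} (G₁ : SimpleGraph V₁) (G₂ : SimpleGraph V₂)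

@[simp]
theorem graphJoin_adj_inl_inl {a b : V₁} :
    (G₁.graphJoin G₂).Adj (.inl a) (.inl b) ↔ G₁.Adj a b := by
  simp [graphJoin]

@[simp]
theorem graphJoin_adj_inr_inr {a b : V₂} :
    (G₁.graphJoin G₂).Adj (.inr a) (.inr b) ↔ G₂.Adj a b := by
  simp [graphJoin]

@[simp]
theorem graphJoin_adj_inl_inr (a : V₁) (b : V₂) : (G₁.graphJoin G₂).Adj (.inl a) (.inr b) := by
  simp [graphJoin]

@[simp]
theorem graphJoin_adj_inr_inl (a : V₂) (b : V₁) : (G₁.graphJoin G₂).Adj (.inr a) (.inl b) := by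
  simp [graphJoin]

theorem toLeft_eq_empty_or_toRight_eq_empty_of_indep {A : Finset (V₁ ⊕ V₂)}
    (hA : ∀ u ∈ A, ∀ w ∈ A, ¬ (G₁.graphJoin G₂).Adj u w) :
    A.toLeft = ∅ ∨ A.toRight = ∅ := by
  by_contra! h
  obtain ⟨⟨a, ha⟩, ⟨b, hb⟩⟩ := h
  exact hA _ (mem_toLeft.mp ha) _ (mem_toRight.mp hb) (graphJoin_adj_inl_inr G₁ G₂ a b)

theorem map_inl_mem_nhdComplex_graphJoin [Fintype V₁] [Fintype V₂] [Nonempty V₂]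
    (B : Finset V₁) : B.map .inl ∈ nhdComplex (G₁.graphJoin G₂) := by
  obtain ⟨w⟩ := ‹Nonempty V₂›
  simp only [nhdComplex, mem_filter, mem_univ, true_and]
  refine ⟨.inr w, ?_⟩
  intro x hx
  obtain ⟨a, -, rfl⟩ := by simpa using hx
  exact graphJoin_adj_inr_inl G₁ G₂ w a

theorem map_inr_mem_nhdComplex_graphJoin [Fintype V₁] [Fintype V₂] [Nonempty V₁]
    (C : Finset V₂) : C.map .inr ∈ nhdComplex (G₁.graphJoin G₂) := by
  obtain ⟨w⟩ := ‹Nonempty V₁›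
  simp only [nhdComplex, mem_filter, mem_univ, true_and]
  refine ⟨.inl w, ?_⟩
  intro x hx
  obtain ⟨a, -, rfl⟩ := by simpa using hx
  exact graphJoin_adj_inl_inr G₁ G₂ w a

theorem nhdComplex_inter_indepFinsets_graphJoin [Fintype V₁] [Fintype V₂] [DecidableEq V₁]
    [DecidableEq V₂] [Nonempty V₁] [Nonempty V₂] :
    nhdComplex (G₁.graphJoin G₂) ∩ indepFinsets (G₁.graphJoin G₂) =
      (indepFinsets G₁).map (mapEmbedding .inl).toEmbedding ∪
        (indepFinsets G₂).map (mapEmbedding .inr).toEmbedding := by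
  ext A
  simp only [mem_inter, mem_union, mem_map, mem_indepFinsets, RelEmbedding.coe_toEmbedding,
    mapEmbedding_apply]
  constructor
  · rintro ⟨-, hA⟩
    rcases toLeft_eq_empty_or_toRight_eq_empty_of_indep G₁ G₂ hA with hL | hR
    · have hA' : A.toRight.map .inr = A := by
        rw [← empty_disjSum, ← hL, toLeft_disjSum_toRight]
      rw [← hA'] at hA
      exact .inr ⟨A.toRight, by simpa using hA, hA'⟩
    · have hA' : A.toLeft.map .inl = A := by
        rw [← disjSum_empty, ← hR, toLeft_disjSum_toRight]
      rw [← hA'] at hA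
      exact .inl ⟨A.toLeft, by simpa using hA, hA'⟩
  · rintro (⟨B, hB, rfl⟩ | ⟨C, hC, rfl⟩)
    · refine ⟨map_inl_mem_nhdComplex_graphJoin G₁ G₂ B, ?_⟩
      simpa using hB
    · refine ⟨map_inr_mem_nhdComplex_graphJoin G₁ G₂ C, ?_⟩
      simpa using hC

end SimpleGraph

/-- The independent neighborhood polynomial of the join of two nonempty graphs is
`I(G₁,x) + I(G₂,x) - 1`, where `I` denotes the independence polynomial. -/
theorem indNbhdPoly_join {V₁ V₂ : Type*} [Fintype V₁] [Fintype V₂]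
    [Nonempty V₁] [Nonempty V₂] (G₁ : SimpleGraph V₁) (G₂ : SimpleGraph V₂) :
    indNbhdPoly (G₁.graphJoin G₂) = indepPoly G₁ + indepPoly G₂ - 1 := by
  classical
  have hcommon := map_inl_inter_map_inr_eq_singleton_empty (empty_mem_indepFinsets G₁)
    (empty_mem_indepFinsets G₂)
  rw [indNbhdPoly_eq_sum_inter_indepFinsets, G₁.nhdComplex_inter_indepFinsets_graphJoin G₂,
    sum_union_of_inter_eq_singleton hcommon, sum_map, sum_map]
  simp only [RelEmbedding.coe_toEmbedding, mapEmbedding_apply, card_map, card_empty, pow_zero,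
    indepPoly_eq_sum_indepFinsets]
end

section
/- Let G=(V,E) be a finite simple graph and r a positive integer, and let exp(G,r) be the r-expansion of G. Then N^{(i)}(exp(G,r), x) = N^{(i)}(G, (1+x)^r − 1), i.e., the independent neighborhood polynomial of exp(G,r) is obtained from that of G by substituting (1+x)^r − 1 for the variable. -/
open Finset Polynomial

/-- The `r`-expansion of `G`: every vertex is replaced by an independent set of size `r`
and every edge by a complete bipartite graph `K_{r,r}` between the corresponding sets. -/
def SimpleGraph.expansion {V : Type*} (G : SimpleGraph V) (r : ℕ) :
    SimpleGraph (V × Fin r) where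
  Adj x y := G.Adj x.1 y.1
  symm := ⟨fun x y h => G.adj_symm h⟩
  loopless := ⟨fun x h => G.irrefl h⟩

/-! A set `B` of vertices of `exp(G, r)` lies in the independent neighborhood complex iff its
shadow `A = B.image Prod.fst` does in `G`, because adjacency in `exp(G, r)` only sees first
coordinates. Grouping the sets `B` by their shadow, those with shadow `A` amount to a choice of a
nonempty subset of `I_v` for each `v ∈ A`, so together they contribute `((1 + x)^r - 1)^|A|`. -/

open scoped Classical

section NbhdComplex

variable {V : Type*} [Fintype V]

noncomputable def indNbhdComplex (G : SimpleGraph V) : Finset (Finset V) :=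
  (nhdComplex G).filter (fun A => ∀ u ∈ A, ∀ w ∈ A, ¬ G.Adj u w)

theorem indNbhdPoly_eq_sum (G : SimpleGraph V) :
    indNbhdPoly G = ∑ A ∈ indNbhdComplex G, X ^ #A :=
  rfl

theorem mem_indNbhdComplex {G : SimpleGraph V} {A : Finset V} :
    A ∈ indNbhdComplex G ↔
      (∃ v, (A : Set V) ⊆ G.neighborSet v) ∧ ∀ u ∈ A, ∀ w ∈ A, ¬ G.Adj u w := by
  simp [indNbhdComplex, nhdComplex]

theorem mem_indNbhdComplex_comap {W : Type*} [Fintype W] {G : SimpleGraph V} {f : W → V}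
    (hf : Function.Surjective f) {B : Finset W} :
    B ∈ indNbhdComplex (G.comap f) ↔ B.image f ∈ indNbhdComplex G := by
  have hnbhd (x : W) : (G.comap f).neighborSet x = f ⁻¹' G.neighborSet (f x) := rfl
  simp only [mem_indNbhdComplex, coe_image, Set.image_subset_iff, forall_mem_image, hnbhd,
    SimpleGraph.comap_adj, hf.exists]

end NbhdComplex

section Fibers

variable {V W : Type*} [Fintype V] [Fintype W]

noncomputable def finsetProdEquivPi : Finset (V × W) ≃ (V → Finset W) where
  toFun B v := {w | (v, w) ∈ B}
  invFun F := {p | p.2 ∈ F p.1}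
  left_inv B := by ext; simp
  right_inv F := by ext; simp

theorem card_eq_sum_card_finsetProdEquivPi (B : Finset (V × W)) :
    #B = ∑ v, #(finsetProdEquivPi B v) := by
  simp only [finsetProdEquivPi, Equiv.coe_fn_mk, card_filter]
  rw [← Fintype.sum_prod_type', ← card_filter, filter_mem_eq_inter, univ_inter]

theorem image_fst_eq_filter_nonempty (B : Finset (V × W)) :
    B.image Prod.fst = ({v | (finsetProdEquivPi B v).Nonempty} : Finset V) := by
  ext v
  simp [finsetProdEquivPi, Finset.Nonempty]

theorem sum_pow_card_nonempty {R : Type*} [CommRing R] (x : R) :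
    ∑ S : Finset W with S.Nonempty, x ^ #S = (1 + x) ^ Fintype.card W - 1 := by
  have h := Fintype.sum_pow_mul_eq_add_pow W x 1
  simp only [one_pow, mul_one] at h
  rw [add_comm 1, ← h, ← sum_filter_add_sum_filter_not univ Finset.Nonempty]
  simp [not_nonempty_iff_eq_empty, filter_eq']

theorem sum_pow_card_of_image_fst_eq {R : Type*} [CommRing R] (x : R) (A : Finset V) :
    ∑ B : Finset (V × W) with B.image Prod.fst = A, x ^ #B =
      ((1 + x) ^ Fintype.card W - 1) ^ #A := by
  -- The condition on the shadow splits into one condition per vertex, so the sum factors.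
  calc ∑ B : Finset (V × W) with B.image Prod.fst = A, x ^ #B
      = ∑ F : V → Finset W, ∏ v, if ((F v).Nonempty ↔ v ∈ A) then x ^ #(F v) else 0 := by
        rw [sum_filter]
        refine Fintype.sum_equiv finsetProdEquivPi
          (fun B => if B.image Prod.fst = A then x ^ #B else 0)
          (fun F => ∏ v, if ((F v).Nonempty ↔ v ∈ A) then x ^ #(F v) else 0) fun B => ?_
        rw [prod_ite_zero, image_fst_eq_filter_nonempty, card_eq_sum_card_finsetProdEquivPi,
          prod_pow_eq_pow_sum]
        simp only [Finset.ext_iff, mem_filter, mem_univ, true_and, forall_const]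
    _ = ∏ v, ∑ S : Finset W, if (S.Nonempty ↔ v ∈ A) then x ^ #S else 0 :=
        (Fintype.prod_sum fun v (S : Finset W) => if (S.Nonempty ↔ v ∈ A) then x ^ #S else 0).symm
    _ = ∏ v, if v ∈ A then (1 + x) ^ Fintype.card W - 1 else 1 := by
        refine prod_congr rfl fun v _ => ?_
        by_cases hv : v ∈ A
        · simp [hv, ← sum_filter, sum_pow_card_nonempty]
        · simp [hv, not_nonempty_iff_eq_empty]
    _ = ((1 + x) ^ Fintype.card W - 1) ^ #A := by
        rw [prod_ite_mem, univ_inter, prod_const]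

end Fibers

theorem SimpleGraph.expansion_eq_comap {V : Type*} (G : SimpleGraph V) (r : ℕ) :
    G.expansion r = G.comap Prod.fst :=
  rfl

theorem indNbhdPoly_comap_fst {V W : Type*} [Fintype V] [Fintype W] [Nonempty W]
    (G : SimpleGraph V) :
    indNbhdPoly (G.comap (Prod.fst : V × W → V)) =
      (indNbhdPoly G).comp ((1 + X) ^ Fintype.card W - 1) := by
  rw [indNbhdPoly_eq_sum, indNbhdPoly_eq_sum, Polynomial.sum_comp]
  simp only [pow_comp, X_comp, ← sum_pow_card_of_image_fst_eq]
  rw [← sum_fiberwise_of_maps_to (g := image Prod.fst) (t := indNbhdComplex G)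
    fun B hB => (mem_indNbhdComplex_comap Prod.fst_surjective).1 hB]
  refine sum_congr rfl fun A hA => sum_congr (ext fun B => ?_) fun _ _ => rfl
  simp only [mem_filter, mem_univ, true_and, mem_indNbhdComplex_comap Prod.fst_surjective]
  exact ⟨And.right, fun h => ⟨h ▸ hA, h⟩⟩

/-- The independent neighborhood polynomial of the `r`-expansion of `G` is obtained from
that of `G` by substituting `(1+x)^r - 1` for the variable. -/
theorem indNbhdPoly_expansion {V : Type*} [Fintype V] (G : SimpleGraph V)
    (r : ℕ) (hr : 0 < r) :
    indNbhdPoly (G.expansion r) = (indNbhdPoly G).comp ((1 + X) ^ r - 1) := by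
  have : Nonempty (Fin r) := ⟨⟨0, hr⟩⟩
  simpa [G.expansion_eq_comap] using indNbhdPoly_comap_fst (W := Fin r) G
end

section
/- If G is a tree of order n ≥ 2 (a connected acyclic finite simple graph on n vertices), then the connected neighborhood polynomial of G is N^{(c)}(G,x) = 1 + n·x. -/
/-!
A tree is triangle-free, so every neighborhood is an independent set, and an independent set
induces a connected subgraph only when it is a singleton. Conversely, in a tree on at least two
vertices no vertex is isolated, so every singleton lies in some neighborhood. Hence the connected
members of the neighborhood complex are `∅` and the `n` singletons.
-/

open Finset Polynomial

open scoped Classical in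
/-- The connected neighborhood polynomial of `G`: the generating function of the members
of the neighborhood complex inducing a connected subgraph (empty set included). -/
noncomputable def connNbhdPoly {V : Type*} [Fintype V] (G : SimpleGraph V) : Polynomial ℤ :=
  ∑ A ∈ (nhdComplex G).filter
      (fun (A : Finset V) => A = ∅ ∨ (G.induce (A : Set V)).Connected), X ^ A.card

namespace SimpleGraph

variable {V : Type*} {G : SimpleGraph V} {s : Set V}

theorem IsIndepSet.induce_eq_bot (hs : G.IsIndepSet s) : G.induce s = ⊥ := by
  ext u w
  simpa using fun huw ↦ hs u.2 w.2 huw.ne huw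

theorem IsIndepSet.connected_induce_iff (hs : G.IsIndepSet s) :
    (G.induce s).Connected ↔ ∃ v, s = {v} := by
  rw [hs.induce_eq_bot, connected_bot_iff, Set.subsingleton_coe, Set.nonempty_coe_sort,
    and_comm, Set.exists_eq_singleton_iff_nonempty_subsingleton]

end SimpleGraph

section NeighborhoodComplex

variable {V : Type*} [Fintype V] {G : SimpleGraph V}

theorem mem_nhdComplex {A : Finset V} :
    A ∈ nhdComplex G ↔ ∃ v, (A : Set V) ⊆ G.neighborSet v := by
  simp [nhdComplex]

theorem empty_mem_nhdComplex [Nonempty V] : ∅ ∈ nhdComplex G :=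
  mem_nhdComplex.mpr ⟨Classical.arbitrary V, by simp⟩

theorem singleton_mem_nhdComplex {v : V} (hv : ¬G.IsIsolated v) : {v} ∈ nhdComplex G := by
  obtain ⟨w, hvw⟩ := G.exists_adj_iff_not_isIsolated.mpr hv
  exact mem_nhdComplex.mpr ⟨w, by simpa using hvw.symm⟩

open scoped Classical in
theorem filter_connected_nhdComplex_of_cliqueFree_three [Nonempty V] (h3 : G.CliqueFree 3)
    (hiso : ∀ v, ¬G.IsIsolated v) :
    (nhdComplex G).filter (fun (A : Finset V) => A = ∅ ∨ (G.induce (A : Set V)).Connected)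
      = insert ∅ (univ.map ⟨singleton, singleton_injective⟩) := by
  ext A
  simp only [mem_filter, mem_insert, mem_map, mem_univ, true_and, Function.Embedding.coeFn_mk]
  constructor
  · rintro ⟨hA, rfl | hconn⟩
    · exact .inl rfl
    · obtain ⟨v, hv⟩ := mem_nhdComplex.mp hA
      have hind : G.IsIndepSet A := (G.isIndepSet_neighborSet_of_triangleFree h3 v).mono hv
      obtain ⟨w, hw⟩ := hind.connected_induce_iff.mp hconn
      exact .inr ⟨w, (coe_eq_singleton.mp hw).symm⟩
  · rintro (rfl | ⟨v, rfl⟩)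
    · exact ⟨empty_mem_nhdComplex, .inl rfl⟩
    · refine ⟨singleton_mem_nhdComplex (hiso v), .inr ?_⟩
      rw [coe_singleton]
      exact (SimpleGraph.IsIndepSet.connected_induce_iff (Set.pairwise_singleton v _)).mpr ⟨v, rfl⟩

theorem connNbhdPoly_of_cliqueFree_three [Nonempty V] (h3 : G.CliqueFree 3)
    (hiso : ∀ v, ¬G.IsIsolated v) :
    connNbhdPoly G = 1 + (Fintype.card V : ℤ[X]) * X := by
  classical
  rw [connNbhdPoly, filter_connected_nhdComplex_of_cliqueFree_three h3 hiso,
    sum_insert (by simp), sum_map]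
  simp

end NeighborhoodComplex

/-- If `G` is a tree of order `n ≥ 2`, then its connected neighborhood polynomial is
`1 + n·x`. -/
theorem connNbhdPoly_of_isTree {V : Type*} [Fintype V] (G : SimpleGraph V) (n : ℕ)
    (hcard : Fintype.card V = n) (hn : 2 ≤ n) (hG : G.IsTree) :
    connNbhdPoly G = 1 + (n : Polynomial ℤ) * X := by
  subst hcard
  have : Nontrivial V := Fintype.one_lt_card_iff_nontrivial.mp hn
  exact connNbhdPoly_of_cliqueFree_three (hG.isAcyclic.cliqueFree le_rfl)
    hG.connected.preconnected.not_isIsolated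
end

section
/- Let G=(V,E) be a finite simple graph of order n and let Ḡ denote its complement. Then the domination polynomial of G and the neighborhood polynomial of Ḡ satisfy D(G,x) + N(Ḡ,x) = (1+x)^n. -/
/-!
A set `A` lies in the neighborhood complex of `Ḡ` exactly when some vertex `v ∉ A` has no
`G`-neighbor in `A`, i.e. exactly when `A` fails to dominate `G`. So every subset of `V` is
counted once in `D(G,x) + N(Ḡ,x)`, and the generating function of all subsets is `(1+x)^n`.
-/

open Finset Polynomial

/-- The neighborhood polynomial of `G`. -/
noncomputable def nbhdPoly {V : Type*} [Fintype V] (G : SimpleGraph V) : Polynomial ℤ :=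
  ∑ A ∈ nhdComplex G, X ^ A.card

open scoped Classical in
/-- The domination polynomial of `G`: the generating function of the dominating sets
of `G`, i.e. the sets `W` with `N[W] = V`. -/
noncomputable def domPoly {V : Type*} [Fintype V] (G : SimpleGraph V) : Polynomial ℤ :=
  ∑ W ∈ Finset.univ.filter
      (fun (W : Finset V) => ∀ v : V, v ∈ W ∨ ∃ w ∈ W, G.Adj w v), X ^ W.card


namespace SimpleGraph

variable {V : Type*}

def IsDominating (G : SimpleGraph V) (W : Finset V) : Prop :=
  ∀ v : V, v ∈ W ∨ ∃ w ∈ W, G.Adj w v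

theorem not_isDominating_iff {G : SimpleGraph V} {W : Finset V} :
    ¬ G.IsDominating W ↔ ∃ v ∉ W, ∀ w ∈ W, ¬ G.Adj v w := by
  simp only [IsDominating, not_forall, not_or, not_exists, not_and, G.adj_comm]

variable [Fintype V]

theorem mem_nhdComplex {G : SimpleGraph V} {A : Finset V} :
    A ∈ nhdComplex G ↔ ∃ v, ∀ a ∈ A, G.Adj v a := by
  classical
  simp [nhdComplex, Set.subset_def]

theorem mem_nhdComplex_compl {G : SimpleGraph V} {A : Finset V} :
    A ∈ nhdComplex Gᶜ ↔ ¬ G.IsDominating A := by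
  rw [mem_nhdComplex, not_isDominating_iff]
  refine exists_congr fun v => ⟨fun h => ⟨fun hv => (h v hv).1 rfl, fun w hw => (h w hw).2⟩,
    fun ⟨hv, h⟩ w hw => ⟨fun hvw => hv (hvw ▸ hw), h w hw⟩⟩

open scoped Classical in
theorem domPoly_eq_sum_isDominating (G : SimpleGraph V) :
    domPoly G = ∑ W ∈ univ.filter G.IsDominating, X ^ #W := by
  rw [domPoly]
  congr

open scoped Classical in
theorem nhdComplex_compl (G : SimpleGraph V) :
    nhdComplex Gᶜ = univ.filter fun A => ¬ G.IsDominating A := by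
  ext A
  simp [mem_nhdComplex_compl]

end SimpleGraph

theorem Finset.sum_X_pow_card_univ {α R : Type*} [Fintype α] [CommSemiring R] :
    ∑ W : Finset α, (X : R[X]) ^ #W = (1 + X) ^ Fintype.card α := by
  simpa [add_comm] using Fintype.sum_pow_mul_eq_add_pow α (X : R[X]) 1

/-- The domination polynomial of `G` and the neighborhood polynomial of the complement
of `G` satisfy `D(G,x) + N(Ḡ,x) = (1+x)^n`. -/
theorem domPoly_add_nbhdPoly_compl {V : Type*} [Fintype V] (G : SimpleGraph V) (n : ℕ)
    (hcard : Fintype.card V = n) :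
    domPoly G + nbhdPoly Gᶜ = (1 + X) ^ n := by
  classical
  rw [G.domPoly_eq_sum_isDominating, nbhdPoly, G.nhdComplex_compl,
    sum_filter_add_sum_filter_not, Finset.sum_X_pow_card_univ, hcard]
end
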